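/- arXiv:0712.0104 — 6 statements merged into one kernel-verified Lean document; each statement's English description precedes it below -/
import Mathlib

section
/- In a symmetric system, if a group X with a map t ↦ t^X from T to X satisfies the axioms of a T-reflection group that separates reflections and t^X ≠ 1 for all t (i.e. T is proper), then for all s, t ∈ T we have s.s = s, and s.t = t if and only if t.s = s. -/
/-- A symmetric system: a set with a multiplication satisfying (S1) and (S2). -/
structure SymmetricSystem (T : Type*) where
  mul : T → T → T
  s1 : ∀ s t : T, mul s (mul s t) = t
  s2 : ∀ r s t : T, mul r (mul s t) = mul (mul r s) (mul r t)

/-- A `T`-reflection group: a group `X` acting on `T` together with a map `t ↦ t^X`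
satisfying axioms (G1)-(G4). -/
structure ReflectionGroup {T : Type*} (S : SymmetricSystem T) (X : Type*) [Group X] where
  act : X → T → T
  act_one : ∀ t : T, act 1 t = t
  act_mul : ∀ x y : X, ∀ t : T, act (x * y) t = act x (act y t)
  refl : T → X
  g1 : Subgroup.closure (Set.range refl) = ⊤
  g2 : ∀ s t : T, act (refl t) s = S.mul t s
  g3 : ∀ s t : T, refl t * refl s * (refl t)⁻¹ = refl (S.mul t s)
  g4 : ∀ t : T, refl t * refl t = 1

/-! By (G3), `(s.t)^X` is the conjugate of `t^X` by `s^X`. Hence `(s.s)^X = s^X`, and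
`(s.t)^X = t^X` exactly when `s^X` and `t^X` commute, a symmetric condition; injectivity of
`t ↦ t^X` transports both facts back to `T`. -/

namespace ReflectionGroup

variable {T : Type*} {S : SymmetricSystem T} {X : Type*} [Group X] (R : ReflectionGroup S X)

theorem refl_inv (t : T) : (R.refl t)⁻¹ = R.refl t :=
  inv_eq_of_mul_eq_one_right (R.g4 t)

theorem refl_mul_self (s : T) : R.refl (S.mul s s) = R.refl s := by
  rw [← R.g3, R.g4, one_mul, refl_inv]

theorem refl_mul_eq_iff_commute (s t : T) :
    R.refl (S.mul s t) = R.refl t ↔ Commute (R.refl s) (R.refl t) := by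
  rw [← R.g3, mul_inv_eq_iff_eq_mul]
  rfl

theorem mul_eq_iff_commute (hsep : Function.Injective R.refl) (s t : T) :
    S.mul s t = t ↔ Commute (R.refl s) (R.refl t) :=
  hsep.eq_iff.symm.trans (R.refl_mul_eq_iff_commute s t)

end ReflectionGroup

theorem properSymmetricSystem_idem_and_perp_symm_general
    {T : Type*} (S : SymmetricSystem T) {X : Type*} [Group X]
    (R : ReflectionGroup S X)
    (hsep : Function.Injective R.refl) :
    ∀ s t : T, S.mul s s = s ∧ (S.mul s t = t ↔ S.mul t s = s) := fun s t =>
  ⟨hsep (R.refl_mul_self s), by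
    rw [R.mul_eq_iff_commute hsep, R.mul_eq_iff_commute hsep, Commute.symm_iff]⟩

/-- If a symmetric system `T` has a reflection group that separates reflections and is
proper, then `s.s = s` and `s.t = t ↔ t.s = s` for all `s t ∈ T`. -/
theorem properSymmetricSystem_idem_and_perp_symm
    {T : Type*} (S : SymmetricSystem T) {X : Type*} [Group X]
    (R : ReflectionGroup S X)
    (hsep : Function.Injective R.refl)
    (hproper : ∀ t : T, R.refl t ≠ 1) :
    ∀ s t : T, S.mul s s = s ∧ (S.mul s t = t ↔ S.mul t s = s) :=
  properSymmetricSystem_idem_and_perp_symm_general S R hsep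
end

section
/- Every T-reflection morphism ζ: X → Y is a central extension, i.e. its kernel is contained in the center of X. -/
/-!
By (G2) the actions of `X` and `Y` on `T` agree on the generating reflections, so the action of `X`
factors through `ζ` and the kernel acts trivially on `T`. Extending (G3) from reflections to all of
`X` gives `x t^X x⁻¹ = (x • t)^X`; hence a kernel element commutes with every reflection, and so
with all of `X`.
-/

namespace ReflectionGroup

variable {T : Type*} {S : SymmetricSystem T} {X : Type*} [Group X] (R : ReflectionGroup S X)

theorem act_inv_act (x : X) (t : T) : R.act x⁻¹ (R.act x t) = t := by
  rw [← R.act_mul, inv_mul_cancel, R.act_one]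

theorem act_act_inv (x : X) (t : T) : R.act x (R.act x⁻¹ t) = t := by
  simpa using R.act_inv_act x⁻¹ t

def toPermHom : X →* Equiv.Perm T where
  toFun x := ⟨R.act x, R.act x⁻¹, R.act_inv_act x, R.act_act_inv x⟩
  map_one' := Equiv.ext R.act_one
  map_mul' x y := Equiv.ext (R.act_mul x y)

@[simp]
theorem toPermHom_apply (x : X) (t : T) : R.toPermHom x t = R.act x t := rfl

theorem center_eq_centralizer_range_refl :
    Subgroup.center X = Subgroup.centralizer (Set.range R.refl) := by
  rw [← Subgroup.centralizer_closure, R.g1, Subgroup.coe_top, Subgroup.centralizer_univ]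

theorem conj_refl (x : X) (t : T) : x * R.refl t * x⁻¹ = R.refl (R.act x t) := by
  have hx : x ∈ Subgroup.closure (Set.range R.refl) := R.g1 ▸ Subgroup.mem_top x
  induction hx using Subgroup.closure_induction generalizing t with
  | mem _ hg =>
    obtain ⟨s, rfl⟩ := hg
    rw [R.g3, R.g2]
  | one => simp [R.act_one]
  | mul a b _ _ ha hb =>
    rw [show a * b * R.refl t * (a * b)⁻¹ = a * (b * R.refl t * b⁻¹) * a⁻¹ by group, hb, ha,
      R.act_mul]
  | inv a _ ha =>
    have h := ha (R.act a⁻¹ t)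
    rw [R.act_act_inv] at h
    rw [← h]
    group

section Morphism

variable {Y : Type*} [Group Y] {RX : ReflectionGroup S X} {RY : ReflectionGroup S Y} {ζ : X →* Y}

theorem toPermHom_eq_comp (hζ : ∀ t : T, ζ (RX.refl t) = RY.refl t) :
    RX.toPermHom = RY.toPermHom.comp ζ :=
  MonoidHom.eq_of_eqOn_dense RX.g1 <| by
    rintro _ ⟨t, rfl⟩
    ext s
    simp [RX.g2, RY.g2, hζ]

theorem act_eq_of_mem_ker (hζ : ∀ t : T, ζ (RX.refl t) = RY.refl t) {x : X} (hx : x ∈ ζ.ker)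
    (t : T) : RX.act x t = t := by
  rw [← RX.toPermHom_apply, toPermHom_eq_comp hζ, MonoidHom.comp_apply,
    ζ.mem_ker.mp hx, map_one, Equiv.Perm.one_apply]

end Morphism

end ReflectionGroup

/-- Every `T`-reflection morphism is a central extension: its kernel is central. -/
theorem reflectionMorphism_ker_le_center
    {T : Type*} (S : SymmetricSystem T) {X Y : Type*} [Group X] [Group Y]
    (RX : ReflectionGroup S X) (RY : ReflectionGroup S Y)
    (ζ : X →* Y) (hζ : ∀ t : T, ζ (RX.refl t) = RY.refl t) :
    ζ.ker ≤ Subgroup.center X := by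
  intro x hx
  rw [RX.center_eq_centralizer_range_refl, Subgroup.mem_centralizer_iff]
  rintro _ ⟨t, rfl⟩
  have hconj := RX.conj_refl x t
  rw [ReflectionGroup.act_eq_of_mem_ker hζ hx, mul_inv_eq_iff_eq_mul] at hconj
  exact hconj.symm
end

section
/- For every symmetric system T, the map sending s ∈ T to the bijection s^𝒯: T → T, t ↦ s.t, lands in the symmetric group of T; the subgroup 𝒯 generated by these maps, with the natural action on T, is a T-reflection group, and it is terminal: every T-reflection group admits a unique reflection morphism to 𝒯. -/
/-- For `s ∈ T`, the map `t ↦ s.t` is a bijection of `T` (by (S1)). -/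
def SymmetricSystem.perm {T : Type*} (S : SymmetricSystem T) (s : T) : Equiv.Perm T :=
  Function.Involutive.toPerm (S.mul s) (fun t => S.s1 s t)

/-- The terminal reflection group: the subgroup of the symmetric group of `T` generated by
the maps `t ↦ s.t`. -/
def SymmetricSystem.terminal {T : Type*} (S : SymmetricSystem T) : Subgroup (Equiv.Perm T) :=
  Subgroup.closure (Set.range S.perm)

namespace SymmetricSystem

variable {T : Type*} (S : SymmetricSystem T)

theorem perm_mul_self (t : T) : S.perm t * S.perm t = 1 :=
  Equiv.ext (S.s1 t)

theorem perm_inv (t : T) : (S.perm t)⁻¹ = S.perm t :=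
  inv_eq_of_mul_eq_one_right (S.perm_mul_self t)

theorem perm_conj (s t : T) : S.perm t * S.perm s * (S.perm t)⁻¹ = S.perm (S.mul t s) := by
  rw [perm_inv]
  ext u
  change S.mul t (S.mul s (S.mul t u)) = S.mul (S.mul t s) u
  rw [S.s2, S.s1]

theorem perm_mem_terminal (s : T) : S.perm s ∈ S.terminal :=
  Subgroup.subset_closure ⟨s, rfl⟩

def terminalRefl (s : T) : S.terminal :=
  ⟨S.perm s, S.perm_mem_terminal s⟩

theorem closure_range_terminalRefl : Subgroup.closure (Set.range S.terminalRefl) = ⊤ := by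
  have hrange : Set.range S.terminalRefl = ((↑) : S.terminal → Equiv.Perm T) ⁻¹' Set.range S.perm := by
    ext x
    constructor
    · rintro ⟨s, rfl⟩
      exact ⟨s, rfl⟩
    · rintro ⟨s, hs⟩
      exact ⟨s, Subtype.ext hs⟩
  rw [hrange]
  exact Subgroup.closure_closure_coe_preimage

def terminalReflectionGroup : ReflectionGroup S S.terminal where
  act x t := (x : Equiv.Perm T) t
  act_one _ := rfl
  act_mul _ _ _ := rfl
  refl := S.terminalRefl
  g1 := S.closure_range_terminalRefl
  g2 _ _ := rfl
  g3 s t := Subtype.ext (S.perm_conj s t)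
  g4 t := Subtype.ext (S.perm_mul_self t)

end SymmetricSystem

namespace ReflectionGroup

variable {T : Type*} {S : SymmetricSystem T} {X : Type*} [Group X] (R : ReflectionGroup S X)

abbrev toMulAction : MulAction X T where
  smul := R.act
  one_smul := R.act_one
  mul_smul := R.act_mul

def permHom : X →* Equiv.Perm T :=
  letI := R.toMulAction
  MulAction.toPermHom X T

theorem permHom_refl (t : T) : R.permHom (R.refl t) = S.perm t :=
  Equiv.ext fun s => R.g2 s t

theorem range_permHom : R.permHom.range = S.terminal := by
  rw [MonoidHom.range_eq_map, ← R.g1, MonoidHom.map_closure, ← Set.range_comp]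
  exact congrArg (fun f => Subgroup.closure (Set.range f)) (funext R.permHom_refl)

theorem hom_ext {G : Type*} [Group G] {f g : X →* G} (h : ∀ t, f (R.refl t) = g (R.refl t)) :
    f = g :=
  MonoidHom.eq_of_eqOn_dense R.g1 (by rintro _ ⟨t, rfl⟩; exact h t)

def toTerminal : X →* S.terminal :=
  R.permHom.codRestrict S.terminal fun x => R.range_permHom ▸ ⟨x, rfl⟩

theorem toTerminal_refl (t : T) : R.toTerminal (R.refl t) = S.terminalRefl t :=
  Subtype.ext (R.permHom_refl t)

end ReflectionGroup

/-- The subgroup of `Sym T` generated by the maps `t ↦ s.t`, with the natural action on `T`,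
is a `T`-reflection group, and it is terminal: every `T`-reflection group has a unique
reflection morphism to it. -/
theorem terminal_reflectionGroup
    {T : Type*} (S : SymmetricSystem T) :
    ∃ R : ReflectionGroup S S.terminal,
      (∀ s : T, (R.refl s : Equiv.Perm T) = S.perm s) ∧
      (∀ x : S.terminal, ∀ t : T, R.act x t = (x : Equiv.Perm T) t) ∧
      (∀ (X : Type*) [Group X] (RX : ReflectionGroup S X),
        ∃! φ : X →* S.terminal, ∀ t : T, φ (RX.refl t) = R.refl t) := by
  refine ⟨S.terminalReflectionGroup, fun _ => rfl, fun _ _ => rfl, fun X _ RX => ?_⟩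
  refine ⟨RX.toTerminal, RX.toTerminal_refl, fun φ hφ => ?_⟩
  exact RX.hom_ext fun t => (hφ t).trans (RX.toTerminal_refl t).symm
end

section
/- If φ: X → Y is a surjective group homomorphism and ψ: Y → Z is a group homomorphism such that X and Z are T-reflection groups and ψ∘φ is a T-reflection morphism, then Y becomes a T-reflection group with structure map t ↦ φ(t^X) and action induced via ψ. -/
theorem Subgroup.closure_range_comp_eq_top {ι G H : Type*} [Group G] [Group H] {f : ι → G}
    (hf : Subgroup.closure (Set.range f) = ⊤) {φ : G →* H} (hφ : Function.Surjective φ) :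
    Subgroup.closure (Set.range (φ ∘ f)) = ⊤ := by
  rw [Set.range_comp, ← MonoidHom.map_closure, hf, Subgroup.map_top_of_surjective φ hφ]

namespace ReflectionGroup

variable {T : Type*} {S : SymmetricSystem T} {X Y Z : Type*} [Group X] [Group Y] [Group Z]

def ofFactorization (RX : ReflectionGroup S X) (RZ : ReflectionGroup S Z) (φ : X →* Y)
    (ψ : Y →* Z) (hφ : Function.Surjective φ) (hcomp : ∀ t : T, ψ (φ (RX.refl t)) = RZ.refl t) :
    ReflectionGroup S Y where
  act y := RZ.act (ψ y)
  act_one t := by rw [map_one, RZ.act_one]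
  act_mul x y t := by rw [map_mul, RZ.act_mul]
  refl := φ ∘ RX.refl
  g1 := Subgroup.closure_range_comp_eq_top RX.g1 hφ
  g2 s t := by rw [Function.comp_apply, hcomp, RZ.g2]
  g3 s t := by simp only [Function.comp_apply, ← map_inv, ← map_mul, RX.g3]
  g4 t := by rw [Function.comp_apply, ← map_mul, RX.g4, map_one]

end ReflectionGroup

/-- If `φ : X → Y` is surjective, `ψ : Y → Z` is a homomorphism, `X` and `Z` are
`T`-reflection groups and `ψ ∘ φ` is a `T`-reflection morphism, then `Y` is a
`T`-reflection group with structure map `t ↦ φ(t^X)` and action induced via `ψ`. -/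
theorem reflectionGroup_of_intermediate
    {T : Type*} (S : SymmetricSystem T) {X Y Z : Type*} [Group X] [Group Y] [Group Z]
    (RX : ReflectionGroup S X) (RZ : ReflectionGroup S Z)
    (φ : X →* Y) (ψ : Y →* Z)
    (hφ : Function.Surjective φ)
    (hcomp : ∀ t : T, ψ (φ (RX.refl t)) = RZ.refl t) :
    ∃ RY : ReflectionGroup S Y,
      (∀ t : T, RY.refl t = φ (RX.refl t)) ∧
      (∀ (y : Y) (t : T), RY.act y t = RZ.act (ψ y) t) :=
  ⟨.ofFactorization RX RZ φ ψ hφ hcomp, fun _ => rfl, fun _ _ => rfl⟩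
end

section
/- Let T be a symmetric system, 𝒯 its terminal reflection group, T^{ab} the set of 𝒯-orbits in T with the trivial multiplication. Then the initial T^{ab}-reflection group is isomorphic to the direct sum of copies of ℤ/2 indexed by T^{ab}, and in particular is a proper reflection group. -/
/-- The relations of the presentation by conjugation. -/
def conjRels {T : Type*} (S : SymmetricSystem T) : Set (FreeGroup T) :=
  {w | (∃ t : T, w = FreeGroup.of t * FreeGroup.of t) ∨
       (∃ s t : T, w = FreeGroup.of t * FreeGroup.of s * (FreeGroup.of t)⁻¹ *
          (FreeGroup.of (S.mul t s))⁻¹)}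

/-- The trivial multiplication on a set. -/
def trivialSystem (A : Type*) : SymmetricSystem A where
  mul := fun _ t => t
  s1 := fun _ _ => rfl
  s2 := fun _ _ _ => rfl

/-- The orbit space `T^ab` of the action of the terminal reflection group on `T`. -/
def SymmetricSystem.orbitSpace {T : Type*} (S : SymmetricSystem T) : Type _ :=
  Quotient (MulAction.orbitRel S.terminal T)

/-! The relations of the initial reflection group of a set with the trivial multiplication say
exactly that its generators are commuting involutions. Hence the group is abelian of exponent 2,
that is, a vector space over `ZMod 2`, and since `t ↦ single t 1` respects the relations, the
generators form a basis of it. -/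

theorem mul_comm_of_closure_eq_top {G : Type*} [Group G] {s : Set G}
    (hs : Subgroup.closure s = ⊤) (hcomm : ∀ x ∈ s, ∀ y ∈ s, x * y = y * x) (x y : G) :
    x * y = y * x :=
  have hmem (z : G) : z ∈ s.centralizer.centralizer :=
    Subgroup.closure_le_centralizer_centralizer s (hs ▸ Subgroup.mem_top z)
  Set.centralizer_centralizer_comm_of_comm hcomm x (hmem x) y (hmem y)

theorem FreeGroup.lift_eq_one_of_mem_conjRels_trivialSystem {A G : Type*} [CommGroup G]
    {f : A → G} (hf : ∀ t, f t * f t = 1) :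
    ∀ r ∈ conjRels (trivialSystem A), FreeGroup.lift f r = 1 := by
  rintro r (⟨t, rfl⟩ | ⟨s, t, rfl⟩)
  · simpa using hf t
  · simp [trivialSystem, mul_comm]

namespace trivialSystem

variable {A : Type*}

local notation "P" => PresentedGroup (conjRels (trivialSystem A))

open PresentedGroup

theorem of_mul_self (t : A) : (of t : P) * of t = 1 :=
  (QuotientGroup.eq_one_iff _).2 (Subgroup.subset_normalClosure (Or.inl ⟨t, rfl⟩))

theorem commute_of (s t : A) : Commute (of s : P) (of t) := by
  have h : (of s : P) * of t * (of s)⁻¹ * (of t)⁻¹ = 1 :=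
    (QuotientGroup.eq_one_iff _).2 (Subgroup.subset_normalClosure (Or.inr ⟨t, s, rfl⟩))
  rwa [mul_inv_eq_one, mul_inv_eq_iff_eq_mul] at h

noncomputable local instance : CommGroup P where
  mul_comm := mul_comm_of_closure_eq_top (closure_range_of _) <| by
    rintro _ ⟨s, rfl⟩ _ ⟨t, rfl⟩
    exact commute_of s t

theorem mul_self_eq_one (x : P) : x * x = 1 := by
  have : (powMonoidHom 2 : P →* P) = 1 := ext fun t => (pow_two _).trans (of_mul_self t)
  simpa [← pow_two] using DFunLike.congr_fun this x

noncomputable local instance : Module (ZMod 2) (Additive P) :=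
  AddCommGroup.zmodModule fun x => (two_nsmul x).trans (mul_self_eq_one x.toMul)

noncomputable def toFinsupp : P →* Multiplicative (A →₀ ZMod 2) :=
  toGroup (FreeGroup.lift_eq_one_of_mem_conjRels_trivialSystem
    (f := fun t => Multiplicative.ofAdd (Finsupp.single t 1)) fun t => by
      rw [← ofAdd_add, ← Finsupp.single_add, CharTwo.add_self_eq_zero, Finsupp.single_zero,
        ofAdd_zero])

theorem toFinsupp_of (t : A) : toFinsupp (of t : P) = Multiplicative.ofAdd (Finsupp.single t 1) :=
  toGroup.of _

noncomputable def basisOf : Module.Basis A (ZMod 2) (Additive P) :=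
  .ofRepr <| LinearEquiv.ofLinearMap (toFinsupp.toAdditiveLeft.toZModLinearMap 2)
    (Finsupp.linearCombination (ZMod 2) fun t => Additive.ofMul (of t))
    (Finsupp.lhom_ext fun t b => by
      simp only [LinearMap.comp_apply, Finsupp.linearCombination_single, map_smul]
      simp [toFinsupp_of])
    (LinearMap.toAddMonoidHom_injective <| Additive.addMonoidHom_ext _ _ <| ext fun t => by
      simp [toFinsupp_of])

theorem basisOf_apply (t : A) : basisOf t = Additive.ofMul (of t : P) := by
  simp [basisOf, Module.Basis.coe_ofRepr]

noncomputable def mulEquivFinsupp : P ≃* Multiplicative (A →₀ ZMod 2) :=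
  AddEquiv.toMultiplicativeRight basisOf.repr.toAddEquiv

theorem of_injective : Function.Injective (of : A → P) := fun s t h =>
  basisOf.injective (by simpa [basisOf_apply] using congrArg Additive.ofMul h)

theorem of_ne_one (t : A) : (of t : P) ≠ 1 := fun h =>
  basisOf.ne_zero t (by rw [basisOf_apply, h]; rfl)

end trivialSystem

/-- The initial reflection group of `T^ab` (with the trivial multiplication) is isomorphic
to the direct sum of copies of `ℤ/2` indexed by `T^ab`; in particular it is a proper
reflection group. -/
theorem initial_orbitSpace_reflectionGroup_iso
    {T : Type*} (S : SymmetricSystem T) :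
    Nonempty ((PresentedGroup (conjRels (trivialSystem S.orbitSpace)))
        ≃* Multiplicative (S.orbitSpace →₀ ZMod 2)) ∧
    Function.Injective (fun t : S.orbitSpace =>
      (PresentedGroup.of t : PresentedGroup (conjRels (trivialSystem S.orbitSpace)))) ∧
    (∀ t : S.orbitSpace,
      (PresentedGroup.of t : PresentedGroup (conjRels (trivialSystem S.orbitSpace))) ≠ 1) :=
  ⟨⟨trivialSystem.mulEquivFinsupp⟩, trivialSystem.of_injective, trivialSystem.of_ne_one⟩
end

section
/- Let Δ be an irreducible finite root system with Weyl group 𝒱, and let α, β, γ ∈ Δ. In the coinvariants ℒ ⊗_𝒱 ℒ the following hold: (i) if α and γ are orthogonal, then ⟨β∨, γ⟩·(α ⊗_𝒱 β) = ⟨β∨, α⟩·(β ⊗_𝒱 γ); (ii) 2(α ⊗_𝒱 β) = ⟨α∨, β⟩ (α ⊗_𝒱 α). -/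
/-- A finite (possibly non-reduced) root system, given on its root lattice `L`:
a finite spanning set of nonzero roots together with coroots `α ↦ ⟨α^∨, ·⟩ : L →+ ℤ`,
closed under reflections. -/
structure RootSystemOn (L : Type*) [AddCommGroup L] where
  roots : Set L
  finite : roots.Finite
  nonempty : roots.Nonempty
  ne_zero : ∀ α ∈ roots, α ≠ (0 : L)
  coroot : L → (L →+ ℤ)
  pair_self : ∀ α ∈ roots, coroot α α = 2
  reflect_mem : ∀ α ∈ roots, ∀ β ∈ roots, β - coroot α β • α ∈ roots
  coroot_reflect : ∀ α ∈ roots, ∀ β ∈ roots, ∀ γ : L,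
      coroot (β - coroot α β • α) γ = coroot β γ - coroot β α * coroot α γ
  span : AddSubgroup.closure roots = ⊤

namespace RootSystemOn

variable {L : Type*} [AddCommGroup L] (P : RootSystemOn L)

/-- Irreducibility: the roots admit no partition into two nonempty mutually
orthogonal parts. -/
def IsIrreducible : Prop :=
  ∀ A B : Set L, A ∪ B = P.roots → A.Nonempty → B.Nonempty →
    (∀ α ∈ A, ∀ β ∈ B, P.coroot α β = 0) → False

/-- The reflection in the root `α`, as a map. -/
def reflMap (α : L) : L → L := fun x => x - P.coroot α x • α

/-- The Weyl group: the subgroup of `Aut(L)` generated by the reflections in the roots. -/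
def weyl : AddSubgroup (AddAut L) :=
  AddSubgroup.closure {w : AddAut L | ∃ α ∈ P.roots, ∀ x : L, w x = P.reflMap α x}

/-- The subgroup `ℒ_eff` of the root lattice generated by the elements `v.l − l`. -/
def leff : AddSubgroup L :=
  AddSubgroup.closure {x : L | ∃ w ∈ P.weyl, ∃ l : L, x = w l - l}

end RootSystemOn

/-- The short roots `±eᵢ` of the standard root system of type `B_ℓ` (`A₁` for `ℓ = 1`). -/
def shortRootsB (ℓ : ℕ) : Set (Fin ℓ → ℤ) :=
  {v | ∃ i : Fin ℓ, v = Pi.single i 1 ∨ v = -Pi.single i 1}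

/-- The long roots `±eᵢ ± eⱼ` (`i ≠ j`) of the standard root system of type `B_ℓ`. -/
def longRootsB (ℓ : ℕ) : Set (Fin ℓ → ℤ) :=
  {v | ∃ i j : Fin ℓ, i ≠ j ∧
    (v = Pi.single i 1 + Pi.single j 1 ∨ v = Pi.single i 1 - Pi.single j 1 ∨
     v = -(Pi.single i 1 + Pi.single j 1))}

/-- The standard root system of type `B_ℓ` (of type `A₁` when `ℓ = 1`). -/
def BRoots (ℓ : ℕ) : Set (Fin ℓ → ℤ) := shortRootsB ℓ ∪ longRootsB ℓ

/-- The standard root system of type `BC_ℓ`. -/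
def BCRoots (ℓ : ℕ) : Set (Fin ℓ → ℤ) :=
  BRoots ℓ ∪ {v | ∃ i : Fin ℓ, v = Pi.single i 2 ∨ v = -Pi.single i 2}

open TensorProduct in
/-- The subgroup of `ℒ ⊗ ℒ` generated by the coinvariance relations. -/
noncomputable def RootSystemOn.coinvRel {L : Type*} [AddCommGroup L] (P : RootSystemOn L) :
    AddSubgroup (L ⊗[ℤ] L) :=
  AddSubgroup.closure {z : L ⊗[ℤ] L | ∃ w ∈ P.weyl, ∃ x y : L,
    z = ((w : AddAut L) x) ⊗ₜ[ℤ] ((w : AddAut L) y) - x ⊗ₜ[ℤ] y}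

open TensorProduct in
/-- The coinvariants `ℒ ⊗_𝒱 ℒ`. -/
noncomputable abbrev RootSystemOn.tensV {L : Type*} [AddCommGroup L] (P : RootSystemOn L) :
    Type _ :=
  (L ⊗[ℤ] L) ⧸ P.coinvRel


open TensorProduct

namespace RootSystemOn

variable {L : Type*} [AddCommGroup L] (P : RootSystemOn L)

/-- The reflection in a root, as an additive automorphism. -/
noncomputable def reflAut (d : L) (h2 : P.coroot d d = 2) : AddAut L where
  toFun := P.reflMap d
  invFun := P.reflMap d
  left_inv x := by
    simp only [reflMap, map_sub, map_zsmul, h2, smul_eq_mul]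
    have : (P.coroot d x - P.coroot d x * 2) = -(P.coroot d x) := by ring
    rw [this, neg_smul, sub_neg_eq_add, sub_add_cancel]
  right_inv x := by
    simp only [reflMap, map_sub, map_zsmul, h2, smul_eq_mul]
    have : (P.coroot d x - P.coroot d x * 2) = -(P.coroot d x) := by ring
    rw [this, neg_smul, sub_neg_eq_add, sub_add_cancel]
  map_add' x y := by
    simp only [reflMap, map_add, add_smul]
    abel

lemma reflAut_mem {d : L} (hd : d ∈ P.roots) :
    P.reflAut d (P.pair_self d hd) ∈ P.weyl :=
  AddSubgroup.subset_closure ⟨d, hd, fun _ => rfl⟩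

lemma mk_refl_rel {d : L} (hd : d ∈ P.roots) (x y : L) :
    (QuotientAddGroup.mk ((P.reflMap d x) ⊗ₜ[ℤ] (P.reflMap d y)) : P.tensV)
      = QuotientAddGroup.mk (x ⊗ₜ[ℤ] y) := by
  rw [QuotientAddGroup.eq]
  have h : ((P.reflAut d (P.pair_self d hd) : AddAut L) x) ⊗ₜ[ℤ]
        ((P.reflAut d (P.pair_self d hd) : AddAut L) y) - x ⊗ₜ[ℤ] y ∈ P.coinvRel :=
    AddSubgroup.subset_closure ⟨_, P.reflAut_mem hd, x, y, rfl⟩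
  have h2 := P.coinvRel.neg_mem h
  rwa [neg_sub, sub_eq_neg_add] at h2

lemma tmul_expand (x y d : L) (a c : ℤ) :
    (x - a • d) ⊗ₜ[ℤ] (y - c • d)
      = x ⊗ₜ[ℤ] y - c • (x ⊗ₜ[ℤ] d) - a • (d ⊗ₜ[ℤ] y) + (a * c) • (d ⊗ₜ[ℤ] d) := by
  simp only [TensorProduct.sub_tmul, TensorProduct.tmul_sub, tmul_smul,
    ← TensorProduct.smul_tmul', smul_sub, smul_smul]
  rw [mul_comm c a]
  abel

/-- The coinvariance relation for a reflection, fully expanded. -/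
lemma refl_rel_expanded {d : L} (hd : d ∈ P.roots) (x y : L) :
    P.coroot d y • (QuotientAddGroup.mk (x ⊗ₜ[ℤ] d) : P.tensV)
      + P.coroot d x • (QuotientAddGroup.mk (d ⊗ₜ[ℤ] y) : P.tensV)
      = (P.coroot d x * P.coroot d y) • (QuotientAddGroup.mk (d ⊗ₜ[ℤ] d) : P.tensV) := by
  have h := P.mk_refl_rel hd x y
  rw [reflMap, reflMap, tmul_expand x y d (P.coroot d x) (P.coroot d y)] at h
  have h' : (QuotientAddGroup.mk' P.coinvRel)
        (x ⊗ₜ[ℤ] y - P.coroot d y • (x ⊗ₜ[ℤ] d) - P.coroot d x • (d ⊗ₜ[ℤ] y)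
          + (P.coroot d x * P.coroot d y) • (d ⊗ₜ[ℤ] d))
      = (QuotientAddGroup.mk' P.coinvRel) (x ⊗ₜ[ℤ] y) := h
  rw [map_add, map_sub, map_sub, map_zsmul, map_zsmul, map_zsmul] at h'
  have h'' := h'
  rw [sub_sub, sub_add, sub_eq_self, sub_eq_zero] at h''
  exact h''

/-- (ii): `2·(x ⊗ d) = ⟨d∨, x⟩·(d ⊗ d)` for any `x` and root `d`. -/
lemma two_smul_tmul {d : L} (hd : d ∈ P.roots) (x : L) :
    (2 : ℤ) • (QuotientAddGroup.mk (d ⊗ₜ[ℤ] x) : P.tensV)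
      = P.coroot d x • (QuotientAddGroup.mk (d ⊗ₜ[ℤ] d) : P.tensV) := by
  have h := P.refl_rel_expanded hd d x
  rw [P.pair_self d hd, two_mul, add_smul] at h
  exact add_left_cancel h

lemma lin_aux {M : Type*} [AddCommGroup M] (X Y Z : M) (a c : ℤ)
    (h1 : c • X + a • Y = (a * c) • Z) (h2 : (2 : ℤ) • Y = c • Z) :
    c • X = a • Y := by
  have h3 : (a * c) • Z = a • ((2 : ℤ) • Y) := by rw [h2, mul_smul]
  rw [h3, smul_smul, mul_two, add_smul] at h1
  exact add_right_cancel h1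

end RootSystemOn

open TensorProduct in
/-- Relations among roots in the coinvariants `ℒ ⊗_𝒱 ℒ`:
(i) if `⟨γ∨, α⟩ = 0` then `⟨β∨, γ⟩·(α ⊗_𝒱 β) = ⟨β∨, α⟩·(β ⊗_𝒱 γ)`;
(ii) `2·(α ⊗_𝒱 β) = ⟨α∨, β⟩·(α ⊗_𝒱 α)`. -/
theorem tensV_root_relations
    {L : Type*} [AddCommGroup L] (P : RootSystemOn L) (hirr : P.IsIrreducible)
    (α β γ : L) (hα : α ∈ P.roots) (hβ : β ∈ P.roots) (hγ : γ ∈ P.roots) :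
    (P.coroot γ α = 0 →
      P.coroot β γ • (QuotientAddGroup.mk (α ⊗ₜ[ℤ] β) : P.tensV)
        = P.coroot β α • (QuotientAddGroup.mk (β ⊗ₜ[ℤ] γ) : P.tensV)) ∧
    ((2 : ℤ) • (QuotientAddGroup.mk (α ⊗ₜ[ℤ] β) : P.tensV)
        = P.coroot α β • (QuotientAddGroup.mk (α ⊗ₜ[ℤ] α) : P.tensV)) := by
  refine ⟨fun _ => ?_, P.two_smul_tmul hα β⟩
  exact RootSystemOn.lin_aux _ _ _ _ _ (P.refl_rel_expanded hβ α γ) (P.two_smul_tmul hβ γ)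
end
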